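/- arXiv:2503.16794 — 2 statements merged into one kernel-verified Lean document; each statement's English description precedes it below -/
import Mathlib

section
/- For every instance of problem P with nonnegative utility function u : L → ℝ (i.e., u(ℓ) ≥ 0 for all ℓ ∈ L), the set S = IDAssign(u, L) returned by the algorithm is a feasible subset of L and satisfies u(S) ≥ (1/6)·u(Q) for every feasible subset Q ⊆ L. In particular, IDAssign is a 1/6-approximation algorithm for problem P. -/
/-!
Local ratio. Split `w = w₁ + w₂` at the chosen instance `a`, with `w₁` the decomposed weight;
`w₂` vanishes at `a`, so by induction the recursive answer is `6`-approximate for `w₂`, and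
whether or not `a` is added, the answer keeps its `w₂`-weight. Every feasible set has
`w₁`-weight at most `3 w(a)`, while the answer has `w₁`-weight at least `w(a) / 2`: either it
contains `a`, or adding `a` breaks feasibility, through a second instance of `job a` (worth
`w(a)`) or an overloaded server of `a`. In the latter case either `a` is light, so the rest of
the load exceeds `1 / 2`, or no light instance was left and some heavy instance, with
`b̃ + c̃ > 1 / 2`, shares the server.
-/

def Feasible {L J K : Type*} [DecidableEq L] [DecidableEq J] [DecidableEq K]
    (b c : L → ℝ) (job : L → J) (es : L → K) (S : Finset L) : Prop :=
  (∀ k : K, ∑ ℓ ∈ S.filter (fun ℓ => es ℓ = k), b ℓ ≤ 1) ∧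
  (∀ k : K, ∑ ℓ ∈ S.filter (fun ℓ => es ℓ = k), c ℓ ≤ 1) ∧
  (∀ j : J, (S.filter (fun ℓ => job ℓ = j)).card ≤ 1)

def decompose {L J K : Type*} [DecidableEq J] [DecidableEq K]
    (b c : L → ℝ) (job : L → J) (es : L → K) (w : L → ℝ) (ℓstar : L) (ℓ : L) : ℝ :=
  if job ℓ = job ℓstar then w ℓstar
  else if es ℓ = es ℓstar then w ℓstar * (b ℓ + c ℓ)
  else 0

/-- Pick an instance of `S` minimizing `max (b ℓ) (c ℓ)` among the light
instances of `S` if `S` contains a light instance, and among all instances of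
`S` otherwise. -/
noncomputable def pick {L : Type*} (b c : L → ℝ) (S : Finset L) (hS : S.Nonempty) : L :=
  if h : (S.filter fun ℓ => b ℓ ≤ 1 / 2 ∧ c ℓ ≤ 1 / 2).Nonempty then
    (Finset.exists_min_image _ (fun ℓ => max (b ℓ) (c ℓ)) h).choose
  else
    (Finset.exists_min_image S (fun ℓ => max (b ℓ) (c ℓ)) hS).choose

theorem pick_mem {L : Type*} (b c : L → ℝ) (S : Finset L) (hS : S.Nonempty) :
    pick b c S hS ∈ S := by
  unfold pick
  split
  · next h =>
      exact Finset.filter_subset _ _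
        (Finset.exists_min_image _ (fun ℓ => max (b ℓ) (c ℓ)) h).choose_spec.1
  · next h =>
      exact (Finset.exists_min_image S (fun ℓ => max (b ℓ) (c ℓ)) hS).choose_spec.1

open scoped Classical in
noncomputable def IDAssign {L J K : Type*} [DecidableEq L] [DecidableEq J] [DecidableEq K]
    (b c : L → ℝ) (job : L → J) (es : L → K) (w : L → ℝ) (S : Finset L) : Finset L :=
  if hS' : (S.filter fun ℓ => 0 < w ℓ).Nonempty then
    let ℓstar := pick b c (S.filter fun ℓ => 0 < w ℓ) hS'
    let Srec := IDAssign b c job es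
      (fun ℓ => w ℓ - decompose b c job es w ℓstar ℓ)
      (S.filter fun ℓ => 0 < w ℓ)
    if Feasible b c job es (insert ℓstar Srec) then insert ℓstar Srec else Srec
  else ∅
termination_by (S.filter fun ℓ => 0 < w ℓ).card
decreasing_by
  apply Finset.card_lt_card
  rw [Finset.ssubset_iff_of_subset (Finset.filter_subset _ _)]
  refine ⟨ℓstar, pick_mem _ _ _ _, ?_⟩
  simp [decompose, ℓstar]

namespace Finset

theorem sum_le_sum_filter_pos {ι : Type*} (s : Finset ι) (f : ι → ℝ) :
    ∑ i ∈ s, f i ≤ ∑ i ∈ s.filter (fun i => 0 < f i), f i := by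
  rw [← sum_filter_add_sum_filter_not s (fun i => 0 < f i)]
  have : ∑ i ∈ s.filter (fun i => ¬0 < f i), f i ≤ 0 :=
    sum_nonpos fun i hi => not_lt.mp (mem_filter.mp hi).2
  linarith

end Finset

open Finset

theorem pick_light_or_forall_heavy {L : Type*} {b c : L → ℝ} (S : Finset L) (hS : S.Nonempty) :
    (b (pick b c S hS) ≤ 1 / 2 ∧ c (pick b c S hS) ≤ 1 / 2) ∨
      ∀ ℓ ∈ S, 1 / 2 < max (b ℓ) (c ℓ) := by
  by_cases h : (S.filter fun ℓ => b ℓ ≤ 1 / 2 ∧ c ℓ ≤ 1 / 2).Nonempty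
  · left
    rw [pick, dif_pos h]
    exact (mem_filter.mp (exists_min_image _ _ h).choose_spec.1).2
  · right
    intro ℓ hℓ
    by_contra! hle
    exact h ⟨ℓ, mem_filter.mpr ⟨hℓ, (le_max_left _ _).trans hle, (le_max_right _ _).trans hle⟩⟩

section

variable {L J K : Type*} [DecidableEq J] [DecidableEq K]
  {b c : L → ℝ} {job : L → J} {es : L → K}

theorem decompose_self (w : L → ℝ) (a : L) : decompose b c job es w a a = w a := by
  simp [decompose]

theorem decompose_of_job_eq {w : L → ℝ} {a ℓ : L} (h : job ℓ = job a) :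
    decompose b c job es w a ℓ = w a := by
  simp [decompose, h]

theorem decompose_nonneg (hbc : ∀ ℓ, 0 ≤ b ℓ + c ℓ) {w : L → ℝ} {a : L} (hw : 0 ≤ w a) (ℓ : L) :
    0 ≤ decompose b c job es w a ℓ := by
  unfold decompose
  split_ifs
  exacts [hw, mul_nonneg hw (hbc ℓ), le_rfl]

theorem half_le_decompose_of_heavy (hb : ∀ ℓ, 0 ≤ b ℓ) (hc : ∀ ℓ, 0 ≤ c ℓ) {w : L → ℝ} {a ℓ : L}
    (hw : 0 ≤ w a) (hes : es ℓ = es a) (hheavy : 1 / 2 < max (b ℓ) (c ℓ)) :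
    w a / 2 ≤ decompose b c job es w a ℓ := by
  have hbc : 1 / 2 < b ℓ + c ℓ := by
    rcases max_cases (b ℓ) (c ℓ) with ⟨h, _⟩ | ⟨h, _⟩ <;> linarith [hb ℓ, hc ℓ]
  unfold decompose
  split_ifs
  · linarith
  · nlinarith

/-- Overloading the server of `a` in a resource `f` bounded by `b + c`: if `a` is light in `f`,
the rest of the load exceeds `1 / 2`; otherwise a heavy instance shares the server. -/
theorem half_le_sum_decompose_of_overload (hb : ∀ ℓ, 0 ≤ b ℓ) (hc : ∀ ℓ, 0 ≤ c ℓ) {f : L → ℝ}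
    (hf : ∀ ℓ, f ℓ ≤ 1) (hfbc : ∀ ℓ, f ℓ ≤ b ℓ + c ℓ) {w : L → ℝ} {a : L} (hw : 0 ≤ w a)
    {T : Finset L} (hover : 1 < f a + ∑ ℓ ∈ T.filter (fun ℓ => es ℓ = es a), f ℓ)
    (hcase : f a ≤ 1 / 2 ∨ ∀ ℓ ∈ T, 1 / 2 < max (b ℓ) (c ℓ)) :
    w a / 2 ≤ ∑ ℓ ∈ T, decompose b c job es w a ℓ := by
  have hd : ∀ ℓ ∈ T, 0 ≤ decompose b c job es w a ℓ := fun ℓ _ =>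
    decompose_nonneg (fun ℓ => add_nonneg (hb ℓ) (hc ℓ)) hw ℓ
  rcases hcase with hlight | hheavy
  · have hpoint : ∀ ℓ ∈ T.filter (fun ℓ => es ℓ = es a),
        f ℓ * w a ≤ decompose b c job es w a ℓ := by
      intro ℓ hℓ
      unfold decompose
      split_ifs with _ hes
      · nlinarith [hf ℓ]
      · rw [mul_comm]
        exact mul_le_mul_of_nonneg_left (hfbc ℓ) hw
      · exact absurd (mem_filter.mp hℓ).2 hes
    calc w a / 2 ≤ (∑ ℓ ∈ T.filter (fun ℓ => es ℓ = es a), f ℓ) * w a := by nlinarith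
      _ = ∑ ℓ ∈ T.filter (fun ℓ => es ℓ = es a), f ℓ * w a := sum_mul _ _ _
      _ ≤ ∑ ℓ ∈ T.filter (fun ℓ => es ℓ = es a), decompose b c job es w a ℓ := sum_le_sum hpoint
      _ ≤ ∑ ℓ ∈ T, decompose b c job es w a ℓ :=
          sum_le_sum_of_subset_of_nonneg (filter_subset _ _) fun ℓ hℓ _ => hd ℓ hℓ
  · obtain ⟨ℓ, hℓ⟩ : (T.filter fun ℓ => es ℓ = es a).Nonempty := by
      by_contra! hempty
      rw [hempty, sum_empty] at hover
      linarith [hf a]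
    obtain ⟨hℓT, hes⟩ := mem_filter.mp hℓ
    exact (half_le_decompose_of_heavy hb hc hw hes (hheavy ℓ hℓT)).trans (single_le_sum hd hℓT)

variable [DecidableEq L]

theorem feasible_empty : Feasible b c job es ∅ := by
  refine ⟨fun _ => ?_, fun _ => ?_, fun _ => ?_⟩ <;> simp

theorem one_lt_add_sum_filter_of_one_lt_sum_insert {f : L → ℝ} {T : Finset L} {a : L} {k : K}
    (ha : a ∉ T) (hT : ∑ ℓ ∈ T.filter (fun ℓ => es ℓ = k), f ℓ ≤ 1)
    (h : 1 < ∑ ℓ ∈ (insert a T).filter (fun ℓ => es ℓ = k), f ℓ) :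
    1 < f a + ∑ ℓ ∈ T.filter (fun ℓ => es ℓ = es a), f ℓ := by
  rw [filter_insert] at h
  split_ifs at h with hak
  · rwa [sum_insert (fun h' => ha (mem_filter.mp h').1), ← hak] at h
  · exact absurd hT h.not_ge

theorem exists_conflict_of_not_feasible_insert {T : Finset L} {a : L}
    (hT : Feasible b c job es T) (ha : a ∉ T) (h : ¬Feasible b c job es (insert a T)) :
    1 < b a + ∑ ℓ ∈ T.filter (fun ℓ => es ℓ = es a), b ℓ ∨
      1 < c a + ∑ ℓ ∈ T.filter (fun ℓ => es ℓ = es a), c ℓ ∨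
      ∃ ℓ ∈ T, job ℓ = job a := by
  simp only [Feasible, not_and_or, not_forall, not_le] at h
  rcases h with ⟨k, hk⟩ | ⟨k, hk⟩ | ⟨j, hj⟩
  · exact Or.inl (one_lt_add_sum_filter_of_one_lt_sum_insert ha (hT.1 k) hk)
  · exact Or.inr (Or.inl (one_lt_add_sum_filter_of_one_lt_sum_insert ha (hT.2.1 k) hk))
  · refine Or.inr (Or.inr ?_)
    rw [filter_insert] at hj
    split_ifs at hj with haj
    · rw [card_insert_of_notMem (fun h' => ha (mem_filter.mp h').1)] at hj
      obtain ⟨ℓ, hℓ⟩ := card_pos.mp (by omega : 0 < (T.filter fun ℓ => job ℓ = j).card)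
      exact ⟨ℓ, (mem_filter.mp hℓ).1, (mem_filter.mp hℓ).2.trans haj.symm⟩
    · exact absurd (hT.2.2 j) hj.not_ge

/-- A feasible set meets the job of `a` at most once and loads the server of `a` by at most `1`
in each resource, whence the factor `1 + 2`. -/
theorem sum_decompose_le_three_mul (hbc : ∀ ℓ, 0 ≤ b ℓ + c ℓ) {w : L → ℝ} {a : L} (hw : 0 ≤ w a)
    {Q : Finset L} (hQ : Feasible b c job es Q) :
    ∑ ℓ ∈ Q, decompose b c job es w a ℓ ≤ 3 * w a := by
  have hpoint : ∀ ℓ ∈ Q, decompose b c job es w a ℓ ≤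
      (if job ℓ = job a then w a else 0) + (if es ℓ = es a then w a * (b ℓ + c ℓ) else 0) := by
    intro ℓ _
    have := mul_nonneg hw (hbc ℓ)
    unfold decompose
    split_ifs <;> linarith
  have hjob : ∑ ℓ ∈ Q, (if job ℓ = job a then w a else 0) ≤ w a := by
    rw [← sum_filter, sum_const, nsmul_eq_mul]
    have : ((Q.filter fun ℓ => job ℓ = job a).card : ℝ) ≤ 1 := by exact_mod_cast hQ.2.2 (job a)
    nlinarith
  have hserver : ∑ ℓ ∈ Q, (if es ℓ = es a then w a * (b ℓ + c ℓ) else 0) ≤ 2 * w a := by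
    rw [← sum_filter, ← mul_sum, sum_add_distrib]
    nlinarith [hQ.1 (es a), hQ.2.1 (es a)]
  calc ∑ ℓ ∈ Q, decompose b c job es w a ℓ
      ≤ ∑ ℓ ∈ Q, ((if job ℓ = job a then w a else 0) +
          (if es ℓ = es a then w a * (b ℓ + c ℓ) else 0)) := sum_le_sum hpoint
    _ ≤ 3 * w a := by rw [sum_add_distrib]; linarith

theorem half_le_sum_decompose_of_not_feasible_insert (hb : ∀ ℓ, 0 ≤ b ℓ ∧ b ℓ ≤ 1)
    (hc : ∀ ℓ, 0 ≤ c ℓ ∧ c ℓ ≤ 1) {w : L → ℝ} {a : L} (hw : 0 ≤ w a) {T : Finset L}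
    (hT : Feasible b c job es T) (h : ¬Feasible b c job es (insert a T))
    (hcase : (b a ≤ 1 / 2 ∧ c a ≤ 1 / 2) ∨ ∀ ℓ ∈ T, 1 / 2 < max (b ℓ) (c ℓ)) :
    w a / 2 ≤ ∑ ℓ ∈ T, decompose b c job es w a ℓ := by
  have hb0 ℓ := (hb ℓ).1
  have hc0 ℓ := (hc ℓ).1
  have ha : a ∉ T := fun ha => h (by rwa [insert_eq_of_mem ha])
  rcases exists_conflict_of_not_feasible_insert hT ha h with hover | hover | ⟨ℓ, hℓ, hjob⟩
  · exact half_le_sum_decompose_of_overload hb0 hc0 (fun ℓ => (hb ℓ).2)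
      (fun ℓ => le_add_of_nonneg_right (hc0 ℓ)) hw hover (hcase.imp_left And.left)
  · exact half_le_sum_decompose_of_overload hb0 hc0 (fun ℓ => (hc ℓ).2)
      (fun ℓ => le_add_of_nonneg_left (hb0 ℓ)) hw hover (hcase.imp_left And.right)
  · calc w a / 2 ≤ decompose b c job es w a ℓ := by rw [decompose_of_job_eq hjob]; linarith
      _ ≤ ∑ ℓ ∈ T, decompose b c job es w a ℓ :=
          single_le_sum (fun ℓ _ => decompose_nonneg (fun ℓ => add_nonneg (hb0 ℓ) (hc0 ℓ)) hw ℓ) hℓ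

theorem IDAssign_subset (w : L → ℝ) (S : Finset L) : IDAssign b c job es w S ⊆ S := by
  induction w, S using IDAssign.induct b c job es
  case case1 w S h a Srec hfeas ih =>
    rw [IDAssign, dif_pos h, if_pos hfeas]
    exact insert_subset (filter_subset _ S (pick_mem ..)) (ih.trans (filter_subset _ S))
  case case2 w S h a Srec hfeas ih =>
    rw [IDAssign, dif_pos h, if_neg hfeas]
    exact ih.trans (filter_subset _ S)
  case case3 w S h => rw [IDAssign, dif_neg h]; exact empty_subset S

theorem feasible_IDAssign (w : L → ℝ) (S : Finset L) :
    Feasible b c job es (IDAssign b c job es w S) := by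
  induction w, S using IDAssign.induct b c job es
  case case1 w S h a Srec hfeas ih => rwa [IDAssign, dif_pos h, if_pos hfeas]
  case case2 w S h a Srec hfeas ih => rwa [IDAssign, dif_pos h, if_neg hfeas]
  case case3 w S h => rw [IDAssign, dif_neg h]; exact feasible_empty

theorem sum_inter_le_six_mul_of_local_ratio (hbc : ∀ ℓ, 0 ≤ b ℓ + c ℓ) {w : L → ℝ} {a : L}
    (hw : 0 ≤ w a) {S A Srec Q : Finset L} (hQ : Feasible b c job es Q)
    (hrec : ∑ ℓ ∈ Q ∩ S.filter (fun ℓ => 0 < w ℓ), (w ℓ - decompose b c job es w a ℓ) ≤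
      6 * ∑ ℓ ∈ Srec, (w ℓ - decompose b c job es w a ℓ))
    (hA : w a / 2 ≤ ∑ ℓ ∈ A, decompose b c job es w a ℓ)
    (hSrec : ∑ ℓ ∈ Srec, (w ℓ - decompose b c job es w a ℓ) ≤
      ∑ ℓ ∈ A, (w ℓ - decompose b c job es w a ℓ)) :
    ∑ ℓ ∈ Q ∩ S, w ℓ ≤ 6 * ∑ ℓ ∈ A, w ℓ := by
  have hQS : ∑ ℓ ∈ Q ∩ S.filter (fun ℓ => 0 < w ℓ), decompose b c job es w a ℓ ≤ 3 * w a :=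
    (sum_le_sum_of_subset_of_nonneg inter_subset_left fun ℓ _ _ => decompose_nonneg hbc hw ℓ).trans
      (sum_decompose_le_three_mul hbc hw hQ)
  simp only [sum_sub_distrib] at hrec hSrec
  calc ∑ ℓ ∈ Q ∩ S, w ℓ ≤ ∑ ℓ ∈ Q ∩ S.filter (fun ℓ => 0 < w ℓ), w ℓ := by
        rw [inter_filter]; exact sum_le_sum_filter_pos _ _
    _ ≤ 6 * ∑ ℓ ∈ A, w ℓ := by linarith

theorem sum_inter_le_six_mul_sum_IDAssign (hb : ∀ ℓ, 0 ≤ b ℓ ∧ b ℓ ≤ 1)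
    (hc : ∀ ℓ, 0 ≤ c ℓ ∧ c ℓ ≤ 1) (w : L → ℝ) (S : Finset L) {Q : Finset L}
    (hQ : Feasible b c job es Q) :
    ∑ ℓ ∈ Q ∩ S, w ℓ ≤ 6 * ∑ ℓ ∈ IDAssign b c job es w S, w ℓ := by
  have hbc ℓ : 0 ≤ b ℓ + c ℓ := add_nonneg (hb ℓ).1 (hc ℓ).1
  induction w, S using IDAssign.induct b c job es
  case case1 w S h a Srec hfeas ih =>
    have hw : 0 ≤ w a := (mem_filter.mp (pick_mem b c _ h)).2.le
    rw [IDAssign, dif_pos h, if_pos hfeas]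
    refine sum_inter_le_six_mul_of_local_ratio hbc hw hQ ih ?_ (sum_insert_zero ?_).ge
    · calc w a / 2 ≤ decompose b c job es w a a := by rw [decompose_self]; linarith
        _ ≤ ∑ ℓ ∈ insert a Srec, decompose b c job es w a ℓ :=
          single_le_sum (fun ℓ _ => decompose_nonneg hbc hw ℓ) (mem_insert_self a Srec)
    · rw [decompose_self, sub_self]
  case case2 w S h a Srec hfeas ih =>
    have hw : 0 ≤ w a := (mem_filter.mp (pick_mem b c _ h)).2.le
    rw [IDAssign, dif_pos h, if_neg hfeas]
    refine sum_inter_le_six_mul_of_local_ratio hbc hw hQ ih ?_ le_rfl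
    refine half_le_sum_decompose_of_not_feasible_insert hb hc hw (feasible_IDAssign _ _) hfeas ?_
    exact (pick_light_or_forall_heavy _ h).imp_right fun hheavy ℓ hℓ =>
      hheavy ℓ (IDAssign_subset _ _ hℓ)
  case case3 w S h =>
    rw [IDAssign, dif_neg h, sum_empty, mul_zero]
    exact sum_nonpos fun ℓ hℓ => not_lt.mp fun hpos =>
      h ⟨ℓ, mem_filter.mpr ⟨(mem_inter.mp hℓ).2, hpos⟩⟩

end

theorem idassign_one_sixth_approx_general
    {L J K : Type*} [Fintype L] [DecidableEq L] [DecidableEq J]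
    [DecidableEq K]
    (b c : L → ℝ) (job : L → J) (es : L → K)
    (hb : ∀ ℓ : L, 0 < b ℓ ∧ b ℓ ≤ 1) (hc : ∀ ℓ : L, 0 < c ℓ ∧ c ℓ ≤ 1)
    (u : L → ℝ) :
    Feasible b c job es (IDAssign b c job es u Finset.univ) ∧
    ∀ Q : Finset L, Feasible b c job es Q →
      (1 / 6) * (∑ ℓ ∈ Q, u ℓ) ≤ ∑ ℓ ∈ IDAssign b c job es u Finset.univ, u ℓ := by
  refine ⟨feasible_IDAssign u univ, fun Q hQ => ?_⟩
  have h := sum_inter_le_six_mul_sum_IDAssign (fun ℓ => ⟨(hb ℓ).1.le, (hb ℓ).2⟩)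
    (fun ℓ => ⟨(hc ℓ).1.le, (hc ℓ).2⟩) u univ hQ
  rw [inter_univ] at h
  linarith

/-- For every instance of problem P with nonnegative utilities
`u`, the set `S = IDAssign(u, L)` is a feasible subset of `L` and satisfies
`u(S) ≥ (1/6)·u(Q)` for every feasible subset `Q ⊆ L`; i.e., `IDAssign` is a
`1/6`-approximation algorithm for problem P. -/
theorem idassign_one_sixth_approx
    {L J K : Type*} [Fintype L] [DecidableEq L] [Fintype J] [DecidableEq J]
    [Fintype K] [DecidableEq K]
    (b c : L → ℝ) (job : L → J) (es : L → K)
    (hb : ∀ ℓ : L, 0 < b ℓ ∧ b ℓ ≤ 1) (hc : ∀ ℓ : L, 0 < c ℓ ∧ c ℓ ≤ 1)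
    (u : L → ℝ) (hu : ∀ ℓ : L, 0 ≤ u ℓ) :
    Feasible b c job es (IDAssign b c job es u Finset.univ) ∧
    ∀ Q : Finset L, Feasible b c job es Q →
      (1 / 6) * (∑ ℓ ∈ Q, u ℓ) ≤ ∑ ℓ ∈ IDAssign b c job es u Finset.univ, u ℓ :=
  idassign_one_sixth_approx_general b c job es hb hc u
end

section
/- Let w : L → ℝ be a weight function, let ℓ* ∈ L satisfy w(ℓ*) ≥ 0, and let w₁ be the decomposed weight determined by w and ℓ*. Then for every feasible subset Q ⊆ L, w₁(Q) = ∑_{ℓ∈Q} w₁(ℓ) ≤ 3·w(ℓ*). -/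
/-- For `ℓ* ∈ L` with `w(ℓ*) ≥ 0` and `w₁` the decomposed weight
determined by `w` and `ℓ*`, every feasible subset `Q` satisfies `w₁(Q) ≤ 3·w(ℓ*)`. -/
theorem decompose_sum_le_three_mul
    {L J K : Type*} [Fintype L] [DecidableEq L] [Fintype J] [DecidableEq J]
    [Fintype K] [DecidableEq K]
    (b c : L → ℝ) (job : L → J) (es : L → K)
    (hb : ∀ ℓ : L, 0 < b ℓ ∧ b ℓ ≤ 1) (hc : ∀ ℓ : L, 0 < c ℓ ∧ c ℓ ≤ 1)
    (w : L → ℝ) (ℓstar : L) (hw : 0 ≤ w ℓstar)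
    (Q : Finset L) (hQ : Feasible b c job es Q) :
    ∑ ℓ ∈ Q, decompose b c job es w ℓstar ℓ ≤ 3 * w ℓstar := by
  obtain ⟨hB, hC, hJ⟩ := hQ
  rw [← Finset.sum_filter_add_sum_filter_not Q (fun ℓ => job ℓ = job ℓstar)]
  have h1 : ∑ ℓ ∈ Q.filter (fun ℓ => job ℓ = job ℓstar),
      decompose b c job es w ℓstar ℓ ≤ w ℓstar := by
    have : ∑ ℓ ∈ Q.filter (fun ℓ => job ℓ = job ℓstar),
        decompose b c job es w ℓstar ℓ =
        (Q.filter (fun ℓ => job ℓ = job ℓstar)).card * w ℓstar := by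
      rw [Finset.sum_congr rfl (fun ℓ hℓ => ?_), Finset.sum_const, nsmul_eq_mul]
      simp only [Finset.mem_filter] at hℓ
      simp [decompose, hℓ.2]
    rw [this]
    calc ((Q.filter (fun ℓ => job ℓ = job ℓstar)).card : ℝ) * w ℓstar
        ≤ 1 * w ℓstar := by
          apply mul_le_mul_of_nonneg_right _ hw
          exact_mod_cast hJ (job ℓstar)
      _ = w ℓstar := one_mul _
  have h2 : ∑ ℓ ∈ Q.filter (fun ℓ => ¬ job ℓ = job ℓstar),
      decompose b c job es w ℓstar ℓ ≤ 2 * w ℓstar := by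
    rw [← Finset.sum_filter_add_sum_filter_not (Q.filter (fun ℓ => ¬ job ℓ = job ℓstar))
      (fun ℓ => es ℓ = es ℓstar)]
    have hz : ∑ ℓ ∈ (Q.filter (fun ℓ => ¬ job ℓ = job ℓstar)).filter
        (fun ℓ => ¬ es ℓ = es ℓstar), decompose b c job es w ℓstar ℓ = 0 := by
      apply Finset.sum_eq_zero
      intro ℓ hℓ
      simp only [Finset.mem_filter] at hℓ
      simp [decompose, hℓ.1.2, hℓ.2]
    rw [hz, add_zero]
    have heq : ∑ ℓ ∈ (Q.filter (fun ℓ => ¬ job ℓ = job ℓstar)).filter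
        (fun ℓ => es ℓ = es ℓstar), decompose b c job es w ℓstar ℓ =
        ∑ ℓ ∈ (Q.filter (fun ℓ => ¬ job ℓ = job ℓstar)).filter
        (fun ℓ => es ℓ = es ℓstar), w ℓstar * (b ℓ + c ℓ) := by
      apply Finset.sum_congr rfl
      intro ℓ hℓ
      simp only [Finset.mem_filter] at hℓ
      simp [decompose, hℓ.1.2, hℓ.2]
    rw [heq, ← Finset.mul_sum]
    have hsub : (Q.filter (fun ℓ => ¬ job ℓ = job ℓstar)).filter
        (fun ℓ => es ℓ = es ℓstar) ⊆ Q.filter (fun ℓ => es ℓ = es ℓstar) := by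
      intro ℓ hℓ
      simp only [Finset.mem_filter] at hℓ ⊢
      exact ⟨hℓ.1.1, hℓ.2⟩
    have hbsum : ∑ ℓ ∈ (Q.filter (fun ℓ => ¬ job ℓ = job ℓstar)).filter
        (fun ℓ => es ℓ = es ℓstar), b ℓ ≤ 1 :=
      le_trans (Finset.sum_le_sum_of_subset_of_nonneg hsub
        (fun ℓ _ _ => (hb ℓ).1.le)) (hB (es ℓstar))
    have hcsum : ∑ ℓ ∈ (Q.filter (fun ℓ => ¬ job ℓ = job ℓstar)).filter
        (fun ℓ => es ℓ = es ℓstar), c ℓ ≤ 1 :=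
      le_trans (Finset.sum_le_sum_of_subset_of_nonneg hsub
        (fun ℓ _ _ => (hc ℓ).1.le)) (hC (es ℓstar))
    calc w ℓstar * ∑ ℓ ∈ (Q.filter (fun ℓ => ¬ job ℓ = job ℓstar)).filter
          (fun ℓ => es ℓ = es ℓstar), (b ℓ + c ℓ)
        ≤ w ℓstar * 2 := by
          apply mul_le_mul_of_nonneg_left _ hw
          rw [Finset.sum_add_distrib]
          linarith
      _ = 2 * w ℓstar := mul_comm _ _
  linarith
end
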